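/- Let A be an automaton over Fin n, let B be a folding of A via κ : Q_A → Q_B, and let A_0 = A, A_1, A_2, … be the collapse chain from A to B. Then for every i ∈ ℕ, two states p, q of A belong to the same state of A_i if and only if κ p = κ q and π*(w, p) = π*(w, q) for every word w of length i. -/
import Mathlib


/-- The one-sided shift map on `(Fin n)^ℕ`: `(σ x) i = x (i+1)`. -/
def shiftMap (n : ℕ) : (ℕ → Fin n) → (ℕ → Fin n) := fun x i => x (i + 1)

/-- `b` has orbit length exactly `N` under `f`: `N` is the least `L ≥ 1` with `f^[L] b = b`. -/
def HasOrbitLen {β : Type*} (f : β → β) (b : β) (N : ℕ) : Prop :=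
  IsLeast {L : ℕ | 0 < L ∧ f^[L] b = b} N

/-- An automorphism of the one-sided shift: a homeomorphism commuting with the shift. -/
def IsShiftAut (n : ℕ) (φ : (ℕ → Fin n) ≃ₜ (ℕ → Fin n)) : Prop :=
  ⇑φ ∘ shiftMap n = shiftMap n ∘ ⇑φ

/-- `φ` has finite order. -/
def FiniteOrderAut (n : ℕ) (φ : (ℕ → Fin n) ≃ₜ (ℕ → Fin n)) : Prop :=
  ∃ m : ℕ, 0 < m ∧ (⇑φ)^[m] = id

/-- Extension of the transition function of an automaton to words (letters read in order). -/
def transStar {n : ℕ} {Q : Type*} (π : Fin n → Q → Q) : List (Fin n) → Q → Q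
  | [], q => q
  | x :: w, q => transStar π w (π x q)

/-- The automaton `(Q, π)` is synchronizing at level `k` with synchronizing map `s`. -/
def SyncAtLevelWith {n : ℕ} {Q : Type*} (π : Fin n → Q → Q) (k : ℕ)
    (s : List (Fin n) → Q) : Prop :=
  ∀ w : List (Fin n), w.length = k → ∀ q : Q, transStar π w q = s w

/-- The synchronizing map `s` at level `k` is surjective (the automaton is core). -/
def CoreAt {n : ℕ} {Q : Type*} (s : List (Fin n) → Q) (k : ℕ) : Prop :=
  ∀ q : Q, ∃ w : List (Fin n), w.length = k ∧ s w = q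

/-- An automorphism of the underlying digraph of the automaton `(Q, π)`. -/
structure DigraphAut {Q : Type*} (n : ℕ) (π : Fin n → Q → Q) where
  α : Q ≃ Q
  lab : Q → Equiv.Perm (Fin n)
  compat : ∀ (x : Fin n) (q : Q), π (lab q x) (α q) = α (π x q)

/-- Action of a digraph automorphism on the edge set `Q × Fin n`. -/
def edgeMap {Q : Type*} {n : ℕ} {π : Fin n → Q → Q} (Φ : DigraphAut n π) :
    Q × Fin n → Q × Fin n :=
  fun e => (Φ.α e.1, Φ.lab e.1 e.2)

/-- The output word map `Λ` of a digraph automorphism. -/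
def outWord {Q : Type*} {n : ℕ} (π : Fin n → Q → Q) (lab : Q → Equiv.Perm (Fin n)) :
    List (Fin n) → Q → List (Fin n)
  | [], _ => []
  | x :: w, q => lab q x :: outWord π lab w (π x q)

/-- Action of a digraph automorphism on based circuits: `(q, w) ↦ (α q, Λ(w, q))`. -/
def circMap {Q : Type*} {n : ℕ} {π : Fin n → Q → Q} (Φ : DigraphAut n π) :
    Q × List (Fin n) → Q × List (Fin n) :=
  fun c => (Φ.α c.1, outWord π Φ.lab c.2 c.1)

/-- `(q, w)` is a based circuit: `w` nonempty and `π*(w, q) = q`. -/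
def IsBasedCircuit {Q : Type*} {n : ℕ} (π : Fin n → Q → Q) (c : Q × List (Fin n)) : Prop :=
  c.2 ≠ [] ∧ transStar π c.2 c.1 = c.1

/-- The sliding block code induced by an automaton synchronizing at level `k`
with synchronizing map `s` and digraph automorphism with labelling `lab`:
`(F x) i = lab q_i (x i)` where `q_i = s [x(i+k), x(i+k-1), …, x(i+1)]`. -/
def inducedMap {Q : Type*} {n : ℕ} (k : ℕ) (s : List (Fin n) → Q)
    (lab : Q → Equiv.Perm (Fin n)) : (ℕ → Fin n) → (ℕ → Fin n) :=
  fun x i => lab (s (List.ofFn fun j : Fin k => x (i + k - (j : ℕ)))) (x i)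

/-- `(A, Φ)` (with `A` synchronizing and core) is a support of the shift automorphism `φ`. -/
def IsSupport {Q : Type*} (n : ℕ) (π : Fin n → Q → Q) (Φ : DigraphAut n π)
    (φ : (ℕ → Fin n) ≃ₜ (ℕ → Fin n)) : Prop :=
  ∃ (k : ℕ) (s : List (Fin n) → Q), SyncAtLevelWith π k s ∧ CoreAt s k ∧
    inducedMap k s Φ.lab = ⇑φ

/-- The permutation automorphism of the shift induced by a permutation of `Fin n`. -/
def permAutMap {n : ℕ} (ρ : Equiv.Perm (Fin n)) : (ℕ → Fin n) → (ℕ → Fin n) :=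
  fun x i => ρ (x i)

/-- `t` is heavy for `(A, Φ, N)` with divisibility constant `b`. -/
def Heavy {Q : Type*} {n : ℕ} (π : Fin n → Q → Q) (Φ : DigraphAut n π)
    (N b : ℕ) (t : Q) : Prop :=
  b ∣ N ∧ b ≠ N ∧ (∀ r : ℕ, HasOrbitLen (⇑Φ.α) t r → r ∣ b) ∧
  ∀ (q : Q) (x : Fin n), π x q = t →
    ∀ L : ℕ, HasOrbitLen (edgeMap Φ) (q, x) L → Nat.lcm L b = N

/-- An automaton together with a map to the state set of a target automaton. -/
structure ChainAut (n : ℕ) (B : Type) where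
  St : Type
  tr : Fin n → St → St
  kap : St → B

/-- The relation collapsed at each step of the collapse chain: two states are
identified when they lie over the same state of the target and have identical
transition functions. -/
def chainRel {n : ℕ} {B : Type} (D : ChainAut n B) (u v : D.St) : Prop :=
  D.kap u = D.kap v ∧ ∀ x : Fin n, D.tr x u = D.tr x v

/-- One step of the collapse chain. -/
def chainStep {n : ℕ} {B : Type} (D : ChainAut n B) : ChainAut n B where
  St := Quot (chainRel D)
  tr x := Quot.lift (fun u => Quot.mk _ (D.tr x u)) (fun u v h => congrArg (Quot.mk _) (h.2 x))
  kap := Quot.lift D.kap (fun u v h => h.1)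

/-- The collapse chain from an automaton (over a folding target). -/
def chainIter {n : ℕ} {B : Type} (D : ChainAut n B) : ℕ → ChainAut n B
  | 0 => D
  | i + 1 => chainStep (chainIter D i)

/-- The class of a state in the `i`-th term of the collapse chain. -/
def chainCls {n : ℕ} {B : Type} (D : ChainAut n B) :
    (i : ℕ) → D.St → (chainIter D i).St
  | 0, q => q
  | i + 1, q => Quot.mk _ (chainCls D i q)


lemma chainRel_equiv {n : ℕ} {B : Type} (D : ChainAut n B) : Equivalence (chainRel D) :=
  ⟨fun _ => ⟨rfl, fun _ => rfl⟩, fun h => ⟨h.1.symm, fun x => (h.2 x).symm⟩,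
   fun h h' => ⟨h.1.trans h'.1, fun x => (h.2 x).trans (h'.2 x)⟩⟩

lemma chainIter_kap_cls {n : ℕ} {B : Type} (D : ChainAut n B) :
    ∀ (i : ℕ) (q : D.St), (chainIter D i).kap (chainCls D i q) = D.kap q
  | 0, _ => rfl
  | i + 1, q => chainIter_kap_cls D i q

lemma chainIter_tr_cls {n : ℕ} {B : Type} (D : ChainAut n B) :
    ∀ (i : ℕ) (x : Fin n) (q : D.St),
      (chainIter D i).tr x (chainCls D i q) = chainCls D i (D.tr x q)
  | 0, _, _ => rfl
  | i + 1, x, q => congrArg (Quot.mk _) (chainIter_tr_cls D i x q)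

theorem collapse_chain_characterisation (n : ℕ)
    (Q B : Type) [Fintype Q] [Nonempty Q] [Fintype B] [Nonempty B]
    (π : Fin n → Q → Q) (πB : Fin n → B → B) (κ : Q → B)
    (hsurj : Function.Surjective κ)
    (hfold : ∀ (x : Fin n) (q : Q), κ (π x q) = πB x (κ q)) :
    ∀ (i : ℕ) (p q : Q),
      chainCls ⟨Q, π, κ⟩ i p = chainCls ⟨Q, π, κ⟩ i q ↔
        (κ p = κ q ∧
          ∀ w : List (Fin n), w.length = i → transStar π w p = transStar π w q) := by
  intro i
  induction i with
  | zero =>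
    intro p q
    constructor
    · rintro rfl; exact ⟨rfl, fun w _ => rfl⟩
    · rintro ⟨_, h⟩; exact h [] rfl
  | succ i ih =>
    intro p q
    set D : ChainAut n B := ⟨Q, π, κ⟩ with hD
    constructor
    · intro h
      have hr : chainRel (chainIter D i) (chainCls D i p) (chainCls D i q) :=
        ((chainRel_equiv _).eqvGen_iff).mp (Quot.eqvGen_exact h)
      have hk : κ p = κ q := by
        have := hr.1
        rwa [chainIter_kap_cls, chainIter_kap_cls] at this
      refine ⟨hk, ?_⟩
      intro w hw
      cases w with
      | nil => simp at hw
      | cons x w =>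
        have hx : chainCls D i (π x p) = chainCls D i (π x q) := by
          have := hr.2 x
          rwa [chainIter_tr_cls, chainIter_tr_cls] at this
        exact ((ih (π x p) (π x q)).mp hx).2 w (by simpa using hw)
    · rintro ⟨hk, hw⟩
      apply Quot.sound
      constructor
      · rw [chainIter_kap_cls, chainIter_kap_cls]; exact hk
      · intro x
        rw [chainIter_tr_cls, chainIter_tr_cls]
        apply (ih _ _).mpr
        refine ⟨by rw [show D.tr = π from rfl, hfold, hfold, hk], fun w hwl => ?_⟩
        exact hw (x :: w) (by simp [hwl])
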